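/- For each natural number d, the map k ↦ (C,D)^k is a bijection from the set of Fibonacci indexes of degree d onto the set of words over the alphabet {C, D} of weight d, where each letter C has weight 1 and each letter D has weight 2. -/
import Mathlib


/-- The two-letter alphabet. -/
inductive Letter : Type
  | C : Letter
  | D : Letter
deriving DecidableEq, Repr

open Letter

/-- The block `D^i C^j` corresponding to a pair `(i, j)`. -/
def block (p : ℕ × ℕ) : List Letter :=
  List.replicate p.1 D ++ List.replicate p.2 C

/-- A Fibonacci index is a nonempty list `k : List (ℕ × ℕ)`; the word `(C,D)^k`
is `D^{i_0}C^{j_0} ++ [C,D] ++ … ++ [C,D] ++ D^{i_r}C^{j_r}`. -/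
def cdWord (k : List (ℕ × ℕ)) : List Letter :=
  List.intercalate [C, D] (k.map block)

/-- The degree `2·Σ i_n + Σ j_n + 3r` of a Fibonacci index of order `r + 1`. -/
def degree (k : List (ℕ × ℕ)) : ℕ :=
  2 * (k.map Prod.fst).sum + (k.map Prod.snd).sum + 3 * (k.length - 1)

/-- The weight of a letter: `C` weighs `1`, `D` weighs `2`. -/
def letterWeight : Letter → ℕ
  | Letter.C => 1
  | Letter.D => 2

/-- The weight of a word: the sum of the weights of its letters. -/
def weight (W : List Letter) : ℕ := (W.map letterWeight).sum

/-! ### Auxiliary lemmas about `cdWord` -/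

lemma cdWord_singleton (p : ℕ × ℕ) : cdWord [p] = block p := by
  simp [cdWord, List.intercalate]

lemma cdWord_cons_cons (p q : ℕ × ℕ) (k : List (ℕ × ℕ)) :
    cdWord (p :: q :: k) = block p ++ [C, D] ++ cdWord (q :: k) := by
  simp [cdWord, List.intercalate, List.append_assoc]

lemma cdWord_cons (p : ℕ × ℕ) (k : List (ℕ × ℕ)) (hk : k ≠ []) :
    cdWord (p :: k) = block p ++ [C, D] ++ cdWord k := by
  obtain ⟨q, k, rfl⟩ := List.exists_cons_of_ne_nil hk
  exact cdWord_cons_cons p q k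

lemma block_D_succ (i j : ℕ) : block (i + 1, j) = D :: block (i, j) := by
  simp [block, List.replicate_succ]

lemma block_C_succ (j : ℕ) : block (0, j + 1) = C :: block (0, j) := by
  simp [block, List.replicate_succ]

lemma cdWord_D_cons (i j : ℕ) (rest : List (ℕ × ℕ)) :
    cdWord ((i + 1, j) :: rest) = D :: cdWord ((i, j) :: rest) := by
  rcases eq_or_ne rest [] with rfl | hr
  · rw [cdWord_singleton, cdWord_singleton, block_D_succ]
  · rw [cdWord_cons _ _ hr, cdWord_cons _ _ hr, block_D_succ]
    simp

lemma cdWord_C_cons (j : ℕ) (rest : List (ℕ × ℕ)) :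
    cdWord ((0, j + 1) :: rest) = C :: cdWord ((0, j) :: rest) := by
  rcases eq_or_ne rest [] with rfl | hr
  · rw [cdWord_singleton, cdWord_singleton, block_C_succ]
  · rw [cdWord_cons _ _ hr, cdWord_cons _ _ hr, block_C_succ]
    simp

/-! ### The parser -/

/-- Add one `D` at the front of the first block. -/
def addD : List (ℕ × ℕ) → List (ℕ × ℕ)
  | [] => [(1, 0)]
  | (i, j) :: r => (i + 1, j) :: r

/-- Add one `C` at the end of the first block. -/
def addC : List (ℕ × ℕ) → List (ℕ × ℕ)
  | [] => [(0, 1)]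
  | (i, j) :: r => (i, j + 1) :: r

/-- Parse a word back into a Fibonacci index. -/
def parse : List Letter → List (ℕ × ℕ)
  | [] => [(0, 0)]
  | D :: w => addD (parse w)
  | [C] => [(0, 1)]
  | C :: C :: w => addC (parse (C :: w))
  | C :: D :: w => (0, 0) :: parse w
termination_by w => w.length

lemma parse_nil : parse [] = [(0, 0)] := by rw [parse]
lemma parse_D (w : List Letter) : parse (D :: w) = addD (parse w) := by rw [parse]
lemma parse_C_nil : parse [C] = [(0, 1)] := by rw [parse]
lemma parse_CC (w : List Letter) : parse (C :: C :: w) = addC (parse (C :: w)) := by rw [parse]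
lemma parse_CD (w : List Letter) : parse (C :: D :: w) = (0, 0) :: parse w := by rw [parse]

lemma addD_ne_nil (l : List (ℕ × ℕ)) : addD l ≠ [] := by
  rcases l with _ | ⟨⟨i, j⟩, r⟩ <;> simp [addD]

lemma addC_ne_nil (l : List (ℕ × ℕ)) : addC l ≠ [] := by
  rcases l with _ | ⟨⟨i, j⟩, r⟩ <;> simp [addC]

lemma parse_ne_nil (w : List Letter) : parse w ≠ [] := by
  induction w using parse.induct with
  | case1 => simp [parse]
  | case2 w ih => rw [parse]; exact addD_ne_nil _
  | case3 => simp [parse]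
  | case4 w ih => rw [parse]; exact addC_ne_nil _
  | case5 w ih => rw [parse]; simp

/-! ### Weight computations -/

lemma weight_append (u v : List Letter) : weight (u ++ v) = weight u + weight v := by
  simp [weight]

lemma weight_block (p : ℕ × ℕ) : weight (block p) = 2 * p.1 + p.2 := by
  simp [block, weight, List.map_replicate, letterWeight, Nat.mul_comm]

lemma degree_cons (p : ℕ × ℕ) (k : List (ℕ × ℕ)) (hk : k ≠ []) :
    degree (p :: k) = 2 * p.1 + p.2 + 3 + degree k := by
  have : k.length - 1 + 1 = k.length := Nat.succ_pred_eq_of_pos (List.length_pos_iff.2 hk)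
  simp only [degree, List.map_cons, List.sum_cons, List.length_cons]
  omega

lemma weight_cdWord (k : List (ℕ × ℕ)) (hk : k ≠ []) : weight (cdWord k) = degree k := by
  induction k with
  | nil => simp at hk
  | cons p k ih =>
      rcases eq_or_ne k [] with rfl | hk'
      · simp [cdWord_singleton, weight_block, degree]
      · rw [cdWord_cons p k hk', weight_append, weight_append, weight_block,
          degree_cons p k hk', ih hk']
        simp [weight, letterWeight]

/-! ### `parse` is a two-sided inverse of `cdWord` -/

lemma parse_repC (j : ℕ) : parse (List.replicate j C) = [(0, j)] := by
  induction j with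
  | zero => simp [parse]
  | succ j ih =>
      cases j with
      | zero => simp [parse]
      | succ j =>
          rw [List.replicate_succ, List.replicate_succ, parse_CC, ← List.replicate_succ, ih]
          simp [addC]

lemma parse_repC_sep (j : ℕ) (w : List Letter) :
    parse (List.replicate j C ++ C :: D :: w) = (0, j) :: parse w := by
  induction j with
  | zero => simp [parse]
  | succ j ih =>
      rw [List.replicate_succ]
      cases j with
      | zero =>
          simp only [List.replicate_zero, List.nil_append] at ih ⊢
          show parse (C :: C :: D :: w) = _
          rw [parse_CC, ih]
          simp [addC]
      | succ j =>
          rw [List.cons_append, List.replicate_succ, List.cons_append, parse_CC,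
            ← List.cons_append, ← List.replicate_succ, ih]
          simp [addC]

lemma parse_repD (i : ℕ) (w : List Letter) (a b : ℕ) (rest : List (ℕ × ℕ))
    (h : parse w = (a, b) :: rest) :
    parse (List.replicate i D ++ w) = (a + i, b) :: rest := by
  induction i with
  | zero => simpa using h
  | succ i ih =>
      rw [List.replicate_succ, List.cons_append, parse_D, ih]
      simp only [addD, Nat.add_succ]

lemma parse_cdWord (k : List (ℕ × ℕ)) (hk : k ≠ []) : parse (cdWord k) = k := by
  induction k with
  | nil => simp at hk
  | cons p k ih =>
      obtain ⟨i, j⟩ := p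
      rcases eq_or_ne k [] with rfl | hk'
      · rw [cdWord_singleton]
        simpa [block] using parse_repD i _ 0 j [] (parse_repC j)
      · rw [cdWord_cons _ k hk']
        have h1 : parse (List.replicate j C ++ C :: D :: cdWord k) = (0, j) :: k := by
          rw [parse_repC_sep, ih hk']
        have := parse_repD i (List.replicate j C ++ C :: D :: cdWord k) 0 j k h1
        simpa [block] using this

lemma parse_C_head (w : List Letter) : ∃ j rest, parse (C :: w) = (0, j) :: rest := by
  induction w with
  | nil => exact ⟨1, [], by simp [parse]⟩
  | cons a w ih =>
      cases a with
      | C =>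
          obtain ⟨j, rest, h⟩ := ih
          exact ⟨j + 1, rest, by rw [parse, h]; simp [addC]⟩
      | D => exact ⟨0, parse w, by rw [parse]⟩

lemma cdWord_parse (w : List Letter) : cdWord (parse w) = w := by
  induction w using parse.induct with
  | case1 => rw [parse, cdWord_singleton]; simp [block]
  | case2 w ih =>
      rcases h : parse w with _ | ⟨⟨i, j⟩, rest⟩
      · exact absurd h (parse_ne_nil w)
      · rw [h] at ih
        rw [parse, h]
        simp only [addD]
        rw [cdWord_D_cons, ih]
  | case3 => rw [parse, cdWord_singleton]; simp [block]
  | case4 w ih =>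
      obtain ⟨j, rest, h⟩ := parse_C_head w
      rw [h] at ih
      rw [parse, h]
      simp only [addC]
      rw [cdWord_C_cons, ih]
  | case5 w ih =>
      rw [parse, cdWord_cons _ _ (parse_ne_nil w), ih]
      simp [block]

/-- `k ↦ (C,D)^k` is a bijection from Fibonacci indexes of degree `d` onto
words over `{C, D}` of weight `d`. -/
theorem cdWord_bijOn (d : ℕ) :
    Set.BijOn cdWord {k : List (ℕ × ℕ) | k ≠ [] ∧ degree k = d}
      {W : List Letter | weight W = d} := by
  refine ⟨fun k ⟨hk, hd⟩ => ?_, fun k1 ⟨h1, _⟩ k2 ⟨h2, _⟩ heq => ?_, fun W hW => ?_⟩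
  · simp only [Set.mem_setOf_eq]
    rw [weight_cdWord k hk, hd]
  · rw [← parse_cdWord k1 h1, ← parse_cdWord k2 h2, heq]
  · refine ⟨parse W, ⟨parse_ne_nil W, ?_⟩, cdWord_parse W⟩
    rw [← weight_cdWord _ (parse_ne_nil W), cdWord_parse W]
    exact hW
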